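/- arXiv:2103.01189 — 2 statements merged into one kernel-verified Lean document; each statement's English description precedes it below -/
import Mathlib

section
/- For any types A and B, there is an equivalence of categories between the category Learn(A,B) of learners from A to B and the category of coalgebras for the internal hom polynomial [Ay^A, By^B], i.e., the category of coalgebras for the endofunctor of types X ↦ (A → B) × (A × B → A) × (A × B → X). -/
universe u

open CategoryTheory

structure Learner (A B : Type u) : Type (u + 1) where
  P : Type u
  impl : A × P → B
  upd : A × B × P → P
  req : A × B × P → A

instance Learner.category (A B : Type u) : Category (Learner A B) where
  Hom L L' :=
    { f : L.P → L'.P //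
      (∀ (a : A) (p : L.P), L.impl (a, p) = L'.impl (a, f p)) ∧
      (∀ (a : A) (b : B) (p : L.P), L.req (a, b, p) = L'.req (a, b, f p)) ∧
      (∀ (a : A) (b : B) (p : L.P), f (L.upd (a, b, p)) = L'.upd (a, b, f p)) }
  id L := ⟨id, fun _ _ => rfl, fun _ _ _ => rfl, fun _ _ _ => rfl⟩
  comp {L L' L''} f g := ⟨g.1 ∘ f.1, by
    obtain ⟨f, hfI, hfR, hfU⟩ := f
    obtain ⟨g, hgI, hgR, hgU⟩ := g
    refine ⟨fun a p => ?_, fun a b p => ?_, fun a b p => ?_⟩ <;>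
      simp [hfI, hfR, hfU, hgI, hgR, hgU]⟩
  id_comp f := Subtype.ext rfl
  comp_id f := Subtype.ext rfl
  assoc f g h := Subtype.ext rfl

def learnFunctor (A B : Type u) : Type u ⥤ Type u where
  obj X := (A → B) × (A × B → A) × (A × B → X)
  map f := TypeCat.ofHom fun x => (x.1, x.2.1, f ∘ x.2.2)


/-! A learner `(P, I, U, R)` is, after currying, precisely a map
`P → (A → B) × (A × B → A) × (A × B → P)`, and the three equations defining a morphism of
learners are the three components of the coalgebra square. Both round trips are the identity
on the nose (η for structures and products), so unit and counit are identity isomorphisms. -/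

namespace Learner

variable {A B : Type u}

abbrev toCoalgebra (L : Learner A B) : Endofunctor.Coalgebra (learnFunctor A B) where
  V := L.P
  str := TypeCat.ofHom fun p =>
    (fun a => L.impl (a, p), fun ab => L.req (ab.1, ab.2, p), fun ab => L.upd (ab.1, ab.2, p))

def ofCoalgebra (V : Endofunctor.Coalgebra (learnFunctor A B)) : Learner A B where
  P := V.V
  impl ap := (V.str ap.2).1 ap.1
  upd abp := (V.str abp.2.2).2.2 (abp.1, abp.2.1)
  req abp := (V.str abp.2.2).2.1 (abp.1, abp.2.1)

theorem toCoalgebra_str_comp_map_iff {L L' : Learner A B} (f : L.P → L'.P) :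
    L.toCoalgebra.str ≫ (learnFunctor A B).map (TypeCat.ofHom f) =
        TypeCat.ofHom f ≫ L'.toCoalgebra.str ↔
      (∀ (a : A) (p : L.P), L.impl (a, p) = L'.impl (a, f p)) ∧
      (∀ (a : A) (b : B) (p : L.P), L.req (a, b, p) = L'.req (a, b, f p)) ∧
      (∀ (a : A) (b : B) (p : L.P), f (L.upd (a, b, p)) = L'.upd (a, b, f p)) := by
  rw [ConcreteCategory.hom_ext_iff]
  change (∀ p : L.P, ((fun a => L.impl (a, p), fun ab : A × B => L.req (ab.1, ab.2, p),
      f ∘ fun ab : A × B => L.upd (ab.1, ab.2, p)) : (A → B) × (A × B → A) × (A × B → L'.P)) =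
      (fun a => L'.impl (a, f p), fun ab => L'.req (ab.1, ab.2, f p),
        fun ab => L'.upd (ab.1, ab.2, f p))) ↔ _
  simp only [Prod.ext_iff, funext_iff, Prod.forall, Function.comp_apply, forall_and]
  exact ⟨fun ⟨h₁, h₂, h₃⟩ => ⟨fun a p => h₁ p a, fun a b p => h₂ p a b, fun a b p => h₃ p a b⟩,
    fun ⟨h₁, h₂, h₃⟩ => ⟨fun p a => h₁ a p, fun p a b => h₂ a b p, fun p a b => h₃ a b p⟩⟩

def toCoalgebraFunctor : Learner A B ⥤ Endofunctor.Coalgebra (learnFunctor A B) where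
  obj := toCoalgebra
  map f := ⟨TypeCat.ofHom f.1, (toCoalgebra_str_comp_map_iff f.1).2 f.2⟩

def ofCoalgebraFunctor : Endofunctor.Coalgebra (learnFunctor A B) ⥤ Learner A B where
  obj := ofCoalgebra
  map {V V'} f :=
    ⟨f.f, (toCoalgebra_str_comp_map_iff (L := ofCoalgebra V) (L' := ofCoalgebra V') f.f).1 f.h⟩

def equivCoalgebra : Learner A B ≌ Endofunctor.Coalgebra (learnFunctor A B) :=
  .mk toCoalgebraFunctor ofCoalgebraFunctor (Iso.refl _) (Iso.refl _)

end Learner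

/-- for any types `A` and `B`, the category `Learn(A,B)` of
learners is equivalent to the category of coalgebras for the endofunctor
`X ↦ (A → B) × (A × B → A) × (A × B → X)` induced by `[Ay^A, By^B]`. -/
theorem learn_equiv_coalg (A B : Type u) :
    Nonempty (Learner A B ≌ Endofunctor.Coalgebra (learnFunctor A B)) :=
  ⟨Learner.equivCoalgebra⟩
end

section
/- For any polynomial functor p, there is an equivalence of categories between the category of p-coalgebras and the category of Type-valued functors on the free category on the quiver Tree_p of p-trees, where Tree_p has as vertices the p-trees and, for each p-tree T with root label i ∈ p(1), one arrow out of T for each direction d ∈ p[i], with target the child subtree of T along d. -/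
universe u

open CategoryTheory

/-- A `p`-coalgebra: a type together with a structure map `S → p(S)`. -/
structure Coalg (p : PFunctor.{u, u}) : Type (u + 1) where
  carrier : Type u
  str : carrier → p.Obj carrier

/-- The category of `p`-coalgebras: morphisms are functions commuting with the
structure maps. -/
instance Coalg.category (p : PFunctor.{u, u}) : Category (Coalg p) where
  Hom X Y := { f : X.carrier → Y.carrier // ∀ s, p.map f (X.str s) = Y.str (f s) }
  id X := ⟨id, fun s => by simp⟩
  comp {X Y Z} f g := ⟨g.1 ∘ f.1, fun s => by
    rw [← PFunctor.map_map, f.2 s, g.2 (f.1 s)]; rfl⟩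
  id_comp f := Subtype.ext rfl
  comp_id f := Subtype.ext rfl
  assoc f g h := Subtype.ext rfl

/-- The quiver `Tree_p` of `p`-trees: vertices are `p`-trees (elements of the
M-type of `p`) and an arrow `T ⟶ T'` is a direction `d` at the root of `T`
whose child subtree is `T'`. -/
instance treeQuiver (p : PFunctor.{u, u}) : Quiver (PFunctor.M p) where
  Hom T T' := { d : p.B (PFunctor.M.dest T).1 // (PFunctor.M.dest T).2 d = T' }

/-!
A coalgebra `X` over a fixed coalgebra `C` is the same thing as a family of types indexed by the
states of `C` (the fibres of `X → C`) together with, for every transition `c ⟶ c'` of `C`, a map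
from the fibre over `c` to the fibre over `c'`; conversely such a family `G` is reassembled into
the coalgebra `Σ c, G c` over `C`. This gives `Over C ≌ (Paths C.StateQuiver ⥤ Type u)`. The M-type
is the terminal coalgebra, so `Over (M p) ≌ Coalg p`, and the transitions of `M p` are the arrows
of the quiver of `p`-trees.
-/

namespace PFunctor

variable {P : PFunctor} {α β : Type*}

theorem map_snd_cast {f : α → β} {x : P.Obj α} {y : P.Obj β} (h : P.map f x = y)
    (d : P.B y.1) : f (x.2 (cast (congrArg P.B (congrArg Sigma.fst h).symm) d)) = y.2 d := by
  subst h; rfl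

theorem mk_snd_cast {x : P.Obj α} {i : P.A} (h : x.1 = i) :
    (⟨i, fun d => x.2 (cast (congrArg P.B h.symm) d)⟩ : P.Obj α) = x := by
  subst h; rfl

end PFunctor

namespace Coalg

variable {p : PFunctor.{u, u}}

@[ext]
theorem hom_ext {X Y : Coalg p} {f g : X ⟶ Y} (h : f.1 = g.1) : f = g := Subtype.ext h

def isoMk {X Y : Coalg p} (e : X.carrier ≃ Y.carrier)
    (he : ∀ x, p.map e (X.str x) = Y.str (e x)) : X ≅ Y where
  hom := ⟨e, he⟩
  inv := ⟨e.symm, fun y =>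
    calc p.map e.symm (Y.str y) = p.map e.symm (p.map e (X.str (e.symm y))) := by
          rw [he, e.apply_symm_apply]
      _ = X.str (e.symm y) := by rw [PFunctor.map_map, e.symm_comp_self, PFunctor.id_map]⟩
  hom_inv_id := hom_ext (funext e.symm_apply_apply)
  inv_hom_id := hom_ext (funext e.apply_symm_apply)

-- For the terminal coalgebra this is the quiver `treeQuiver p` of `p`-trees.
def StateQuiver (C : Coalg p) : Type u := C.carrier

instance (C : Coalg p) : Quiver C.StateQuiver where
  Hom c c' := { d : p.B (C.str c).1 // (C.str c).2 d = c' }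

variable {C : Coalg p}

def StateQuiver.transition (c : C.StateQuiver) (d : p.B (C.str c).1) :
    c ⟶ (C.str c).2 d :=
  ⟨d, rfl⟩

def Fiber (X : Over C) (c : C.carrier) : Type u := { x : X.left.carrier // X.hom.1 x = c }

namespace Fiber

variable {X Y : Over C} {c c' : C.StateQuiver}

theorem map_str (x : Fiber X c) : p.map X.hom.1 (X.left.str x.1) = C.str c :=
  (X.hom.2 x.1).trans (congrArg C.str x.2)

theorem fst_str (x : Fiber X c) : (X.left.str x.1).1 = (C.str c).1 :=
  congrArg Sigma.fst (map_str x)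

def next (d : c ⟶ c') (x : Fiber X c) : Fiber X c' :=
  ⟨(X.left.str x.1).2 (cast (congrArg p.B (fst_str x).symm) d.1),
    (PFunctor.map_snd_cast (map_str x) d.1).trans d.2⟩

def map (g : X ⟶ Y) (x : Fiber X c) : Fiber Y c :=
  ⟨g.left.1 x.1, (congrFun (congrArg Subtype.val (Over.w g)) x.1).trans x.2⟩

theorem map_next (g : X ⟶ Y) (d : c ⟶ c') (x : Fiber X c) :
    map g (next d x) = next d (map g x) := by
  refine Subtype.ext ?_
  dsimp only [next, map]
  rw [← PFunctor.map_snd_cast (g.left.2 x.1)]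
  exact congrArg (fun d => g.left.1 ((X.left.str x.1).2 d)) (cast_cast _ _ _).symm

end Fiber

def fiberFunctor (X : Over C) : Paths C.StateQuiver ⥤ Type u :=
  Paths.lift { obj := Fiber X, map := fun d => TypeCat.ofHom (Fiber.next d) }

def fibersFunctor : Over C ⥤ (Paths C.StateQuiver ⥤ Type u) where
  obj := fiberFunctor
  map g := Paths.liftNatTrans (fun _ => TypeCat.ofHom (Fiber.map g)) fun d => by
    ext x
    exact Fiber.map_next g d x

def total (G : Paths C.StateQuiver ⥤ Type u) : Coalg p where
  carrier := Σ c : C.carrier, G.obj c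
  str x := ⟨(C.str x.1).1, fun d => ⟨(C.str x.1).2 d,
    G.map (StateQuiver.transition (C := C) x.1 d).toPath x.2⟩⟩

def totalHom (G : Paths C.StateQuiver ⥤ Type u) : total G ⟶ C :=
  ⟨Sigma.fst, fun _ => rfl⟩

def totalMap {G H : Paths C.StateQuiver ⥤ Type u} (η : G ⟶ H) : total G ⟶ total H :=
  ⟨fun x => ⟨x.1, η.app x.1 x.2⟩, fun x =>
    congrArg (Sigma.mk _) (funext fun _ =>
      congrArg (Sigma.mk _) (NatTrans.naturality_apply η _ x.2))⟩

def totalFunctor : (Paths C.StateQuiver ⥤ Type u) ⥤ Over C where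
  obj G := Over.mk (totalHom G)
  map η := Over.homMk (totalMap η) rfl

def totalFiberIso (X : Over C) : total (fiberFunctor X) ≅ X.left :=
  isoMk (Equiv.sigmaFiberEquiv X.hom.1) fun x => PFunctor.mk_snd_cast (Fiber.fst_str x.2)

def fiberTotalIso (G : Paths C.StateQuiver ⥤ Type u) : fiberFunctor (totalFunctor.obj G) ≅ G :=
  Paths.liftNatIso (fun c => (Equiv.sigmaSubtype c).toIso) fun d => by
    ext ⟨⟨c₀, g⟩, rfl⟩
    obtain ⟨d, rfl⟩ := d
    -- with the base point and the arrow substituted, every cast is along `rfl`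
    rfl

def overEquivalence : Over C ≌ (Paths C.StateQuiver ⥤ Type u) :=
  CategoryTheory.Equivalence.mk fibersFunctor totalFunctor
    (NatIso.ofComponents (fun X =>
      (Over.isoMk (totalFiberIso X) (hom_ext (funext fun x : Σ c, Fiber X c => x.2.2))).symm)
      fun g => by
        ext x
        exact (Equiv.sigmaFiberEquiv _).injective rfl)
    (NatIso.ofComponents fiberTotalIso fun η => by
      ext c ⟨⟨c₀, g⟩, hg⟩
      cases hg
      rfl)

variable (p) in
def terminal : Coalg p := ⟨PFunctor.M p, PFunctor.M.dest⟩

variable (p) in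
def isTerminal : Limits.IsTerminal (terminal p) :=
  Limits.IsTerminal.ofUniqueHom
    (fun X => ⟨PFunctor.M.corec X.str, fun x => (PFunctor.M.dest_corec X.str x).symm⟩)
    fun X f => hom_ext (PFunctor.M.corec_unique X.str f.1 fun x => (f.2 x).symm)

end Coalg

/-- the category of `p`-coalgebras is equivalent to the category
of `Type`-valued functors on the free category on the quiver of `p`-trees. -/
theorem coalg_equiv_copresheaves_on_trees (p : PFunctor.{u, u}) :
    Nonempty (Coalg p ≌ Paths (PFunctor.M p) ⥤ Type u) :=
  ⟨(Over.equivalenceOfIsTerminal (Coalg.isTerminal p)).symm.trans Coalg.overEquivalence⟩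
end
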